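/- arXiv:1708.07296 — 2 statements merged into one kernel-verified Lean document; each statement's English description precedes it below -/
import Mathlib

section
/- Let G be a finite simple graph with at least one edge, with Laplacian matrix L(G) and maximum vertex degree d_max. Then L(G) has a real eigenvalue μ̃ with μ̃ ≥ d_max; i.e. the largest eigenvalue of the Laplacian is at least the maximum degree. -/
/-!
The largest eigenvalue of a Hermitian matrix is the supremum of its Rayleigh quotient, so it
dominates every diagonal entry `A i i`, the Rayleigh quotient of the `i`-th basis vector. The
diagonal entries of the Laplacian are the vertex degrees.
-/

open Matrix

theorem Matrix.IsHermitian.exists_mem_spectrum_re_diag_le {𝕜 ι : Type*} [RCLike 𝕜] [Fintype ι]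
    [DecidableEq ι] {A : Matrix ι ι 𝕜} (hA : A.IsHermitian) (i : ι) :
    ∃ μ ∈ spectrum ℝ A, RCLike.re (A i i) ≤ μ := by
  set T := toEuclideanLin A
  have : Nonempty ι := ⟨i⟩
  set rayleigh : {x : EuclideanSpace 𝕜 ι // x ≠ 0} → ℝ := fun x ↦
    RCLike.re (inner 𝕜 (T x) (x : EuclideanSpace 𝕜 ι)) / ‖(x : EuclideanSpace 𝕜 ι)‖ ^ 2
  refine ⟨⨆ x, rayleigh x, ?_, ?_⟩
  · rw [← spectrum.algebraMap_mem_iff 𝕜, ← spectrum_toLpLin 2,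
      ← Module.End.hasEigenvalue_iff_mem_spectrum]
    exact (isSymmetric_toEuclideanLin_iff.2 hA).hasEigenvalue_iSup_of_finiteDimensional
  · have hbdd : BddAbove (Set.range rayleigh) := by
      refine ⟨‖LinearMap.toContinuousLinearMap T‖, ?_⟩
      rintro _ ⟨x, rfl⟩
      exact (le_abs_self _).trans ((LinearMap.toContinuousLinearMap T).rayleighQuotient_le_norm x)
    refine le_of_eq_of_le ?_ (le_ciSup hbdd ⟨EuclideanSpace.single i 1, by simp⟩)
    simp [rayleigh, T, EuclideanSpace.inner_single_right, mulVec_single]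

theorem SimpleGraph.lapMatrix_apply_self {V R : Type*} [Fintype V] [DecidableEq V]
    [AddGroupWithOne R] (G : SimpleGraph V) [DecidableRel G.Adj] (v : V) :
    G.lapMatrix R v v = G.degree v := by
  simp [lapMatrix, degMatrix]

theorem stmt_12 {n : ℕ} (G : SimpleGraph (Fin n)) [DecidableRel G.Adj]
    (hE : G.edgeSet.Nonempty) :
    ∃ μ : ℝ, μ ∈ spectrum ℝ (G.lapMatrix ℝ) ∧ (G.maxDegree : ℝ) ≤ μ := by
  obtain ⟨e, -⟩ := hE
  have : Nonempty (Fin n) := ⟨e.out.1⟩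
  obtain ⟨v, hv⟩ := G.exists_maximal_degree_vertex
  obtain ⟨μ, hμ, hle⟩ := (G.isHermitian_lapMatrix ℝ).exists_mem_spectrum_re_diag_le v
  refine ⟨μ, hμ, ?_⟩
  simpa [hv, G.lapMatrix_apply_self] using hle
end

section
/- Let n ≥ 3, let G be the path (chain) graph on n vertices, with Laplacian matrix L(G), let D be a real number with D ≥ 4, and let 𝒜 be the 2n×2n real block matrix with blocks (-D·Iₙ, Iₙ; -L(G), 0). Then every complex eigenvalue of 𝒜 is real and nonpositive. -/
/-!
If `(x, y)` is an eigenvector of `𝒜` for `λ`, the two block rows give `y = (λ + D) x` and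
`L x = -λ(λ + D) x` with `x ≠ 0`, so `μ = -λ(λ + D)` is an eigenvalue of the Laplacian. The
Laplacian is Hermitian, so `μ` is real, and Gershgorin's discs put it in `[0, 2Δ] ⊆ [0, 4]`,
where `Δ ≤ 2` is the maximum degree of the path.
Thus `λ` is a root of `z² + D z + μ`, whose discriminant `D² - 4μ` is nonnegative for `D ≥ 4`;
its roots are real with sum `-D < 0` and product `μ ≥ 0`, hence nonpositive.
-/

open Matrix Module.End

namespace Matrix

variable {K n : Type*} [Field K] [Fintype n] [DecidableEq n]

theorem hasEigenvalue_toLin'_iff_mem_spectrum {A : Matrix n n K} {μ : K} :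
    HasEigenvalue (toLin' A) μ ↔ μ ∈ spectrum K A := by
  rw [hasEigenvalue_iff_mem_spectrum, spectrum_toLin']

theorem neg_mul_add_mem_spectrum_of_mem_spectrum_fromBlocks {L : Matrix n n K} {d μ : K}
    (hμ : μ ∈ spectrum K (fromBlocks ((-d) • 1) 1 (-L) 0 : Matrix (n ⊕ n) (n ⊕ n) K)) :
    -(μ * (μ + d)) ∈ spectrum K L := by
  obtain ⟨v, hv⟩ := (hasEigenvalue_toLin'_iff_mem_spectrum.mpr hμ).exists_hasEigenvector
  obtain ⟨x, y, rfl⟩ : ∃ x y, v = Sum.elim x y := ⟨_, _, (Sum.elim_comp_inl_inr v).symm⟩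
  have hsmul : μ • Sum.elim x y = Sum.elim (μ • x) (μ • y) := by ext (i | i) <;> rfl
  obtain ⟨h₁, h₂⟩ := Sum.elim_eq_iff.mp <| by
    simpa only [toLin'_apply, fromBlocks_mulVec, hsmul] using hv.apply_eq_smul
  simp only [Sum.elim_comp_inl, Sum.elim_comp_inr, smul_mulVec, one_mulVec, neg_mulVec,
    zero_mulVec, add_zero] at h₁ h₂
  have hy : y = (μ + d) • x := by linear_combination (norm := module) h₁
  have hx : L *ᵥ x = -(μ * (μ + d)) • x := by
    rw [hy] at h₂
    linear_combination (norm := module) -h₂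
  refine hasEigenvalue_toLin'_iff_mem_spectrum.mp <|
    hasEigenvalue_of_hasEigenvector (x := x) ⟨?_, ?_⟩
  · rw [mem_eigenspace_iff, toLin'_apply, hx]
  · rintro rfl
    exact hv.2 (by simp [hy])

end Matrix

namespace SimpleGraph

section Laplacian

variable {V : Type*} [Fintype V] [DecidableEq V] (G : SimpleGraph V) [DecidableRel G.Adj]

theorem lapMatrix_map {R S : Type*} [Ring R] [Ring S] (f : R →+* S) :
    (G.lapMatrix R).map f = G.lapMatrix S := by
  ext i j
  by_cases h : i = j
  · subst h
    simp [lapMatrix, degMatrix]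
  · simp [lapMatrix, degMatrix, diagonal_apply_ne _ h, adjMatrix_apply, apply_ite f]

theorem lapMatrix_apply_self_s14 {R : Type*} [Ring R] (v : V) : G.lapMatrix R v v = G.degree v := by
  simp [lapMatrix, degMatrix]

theorem lapMatrix_apply_of_ne {R : Type*} [Ring R] {v w : V} (h : v ≠ w) :
    G.lapMatrix R v w = if G.Adj v w then -1 else 0 := by
  simp only [lapMatrix, degMatrix, Matrix.sub_apply, diagonal_apply_ne _ h, adjMatrix_apply,
    zero_sub]
  split_ifs <;> simp

theorem exists_norm_sub_degree_le_of_hasEigenvalue_lapMatrix {K : Type*} [NormedField K]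
    [NormOneClass K] {μ : K} (hμ : HasEigenvalue (toLin' (G.lapMatrix K)) μ) :
    ∃ v, ‖μ - G.degree v‖ ≤ G.degree v := by
  obtain ⟨v, hv⟩ := eigenvalue_mem_ball hμ
  have hoff : ∑ w ∈ Finset.univ.erase v, ‖G.lapMatrix K v w‖ = G.degree v := by
    rw [Finset.sum_congr rfl fun w hw => by
      rw [G.lapMatrix_apply_of_ne (Finset.ne_of_mem_erase hw).symm, apply_ite norm, norm_neg,
        norm_one, norm_zero]]
    rw [Finset.sum_erase _ (by simp), Finset.sum_boole, ← card_neighborFinset_eq_degree,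
      neighborFinset_eq_filter]
  refine ⟨v, ?_⟩
  rwa [Metric.mem_closedBall, hoff, lapMatrix_apply_self_s14, dist_eq_norm] at hv

theorem exists_ofReal_eq_of_mem_spectrum_lapMatrix {𝕜 : Type*} [RCLike 𝕜] {μ : 𝕜}
    (hμ : μ ∈ spectrum 𝕜 (G.lapMatrix 𝕜)) :
    ∃ r : ℝ, μ = r ∧ 0 ≤ r ∧ r ≤ 2 * G.maxDegree := by
  obtain ⟨r, -, rfl⟩ := (G.isHermitian_lapMatrix (R := 𝕜)).spectrum_eq_image_range ▸ hμ
  obtain ⟨v, hv⟩ := G.exists_norm_sub_degree_le_of_hasEigenvalue_lapMatrix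
    (hasEigenvalue_toLin'_iff_mem_spectrum.mpr hμ)
  rw [← RCLike.ofReal_natCast, ← RCLike.ofReal_sub, RCLike.norm_ofReal] at hv
  have hmax : (G.degree v : ℝ) ≤ G.maxDegree := by exact_mod_cast G.degree_le_maxDegree v
  refine ⟨r, rfl, ?_, ?_⟩ <;> linarith [abs_le.mp hv]

end Laplacian

theorem pathGraph_maxDegree_le_two {n : ℕ} [DecidableRel (pathGraph n).Adj] :
    (pathGraph n).maxDegree ≤ 2 := by
  refine maxDegree_le_of_forall_degree_le _ _ fun v => ?_
  rcases n with _ | _ | n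
  · exact v.elim0
  · simp
  · calc (pathGraph (n + 2)).degree v ≤ (cycleGraph (n + 2)).degree v :=
          degree_le_of_le pathGraph_le_cycleGraph
      _ ≤ 2 := cycleGraph_degree_two_le ▸ Finset.card_le_two

end SimpleGraph

theorem Complex.im_eq_zero_and_re_nonpos_of_neg_mul_add_eq {z : ℂ} {d r : ℝ} (hd : 0 ≤ d)
    (hr : 0 ≤ r) (hrd : 4 * r ≤ d ^ 2) (h : -(z * (z + d)) = r) : z.im = 0 ∧ z.re ≤ 0 := by
  obtain ⟨hre, him⟩ := Complex.ext_iff.mp h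
  simp only [neg_re, mul_re, add_re, ofReal_re, add_im, ofReal_im, add_zero, neg_im, mul_im]
    at hre him
  have him0 : z.im = 0 := by
    by_contra hne
    have hsum : 2 * z.re + d = 0 := by
      refine (mul_eq_zero.mp ?_).resolve_left hne
      linear_combination -him
    have : 0 < z.im ^ 2 := by positivity
    nlinarith
  exact ⟨him0, by nlinarith⟩

theorem stmt_14_general {n : ℕ}
    [DecidableRel (SimpleGraph.pathGraph n).Adj]
    (D : ℝ) (hD : 4 ≤ D) :
    let 𝒜 : Matrix (Fin n ⊕ Fin n) (Fin n ⊕ Fin n) ℝ :=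
      Matrix.fromBlocks ((-D) • 1) 1 (-((SimpleGraph.pathGraph n).lapMatrix ℝ)) 0
    ∀ lam : ℂ, lam ∈ spectrum ℂ (𝒜.map Complex.ofReal) →
      lam.im = 0 ∧ lam.re ≤ 0 := by
  intro 𝒜 lam hlam
  have h𝒜 : 𝒜.map Complex.ofReal =
      fromBlocks ((-(D : ℂ)) • 1) 1 (-(SimpleGraph.pathGraph n).lapMatrix ℂ) 0 := by
    rw [← SimpleGraph.lapMatrix_map _ Complex.ofRealHom]
    ext (i | i) (j | j) <;> simp [𝒜, Matrix.one_apply, apply_ite Complex.ofReal]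
  obtain ⟨r, hr, hr0, hr2⟩ :=
    (SimpleGraph.pathGraph n).exists_ofReal_eq_of_mem_spectrum_lapMatrix
      (neg_mul_add_mem_spectrum_of_mem_spectrum_fromBlocks (h𝒜 ▸ hlam))
  have hmax : ((SimpleGraph.pathGraph n).maxDegree : ℝ) ≤ 2 := by
    exact_mod_cast SimpleGraph.pathGraph_maxDegree_le_two
  exact Complex.im_eq_zero_and_re_nonpos_of_neg_mul_add_eq (by linarith) hr0 (by nlinarith) hr

theorem stmt_14 {n : ℕ} (hn : 3 ≤ n)
    [DecidableRel (SimpleGraph.pathGraph n).Adj]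
    (D : ℝ) (hD : 4 ≤ D) :
    let 𝒜 : Matrix (Fin n ⊕ Fin n) (Fin n ⊕ Fin n) ℝ :=
      Matrix.fromBlocks ((-D) • 1) 1 (-((SimpleGraph.pathGraph n).lapMatrix ℝ)) 0
    ∀ lam : ℂ, lam ∈ spectrum ℂ (𝒜.map Complex.ofReal) →
      lam.im = 0 ∧ lam.re ≤ 0 :=
  stmt_14_general D hD
end
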